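/- Fix an integer K with 1 ≤ K < C and let Λ = {λ ∈ [0,1] : μ{x : η̃_{K+1}(x) ≤ λ ≤ η̃_K(x)} = 1}. If Λ is nonempty, then λ_K ∈ Λ and λ_K = min Λ. -/

import Mathlib

open MeasureTheory Finset

/-- Error rate of a set-valued classifier: `ℰ(S) = ∫ (1 − ∑_{k∈S(x)} η_k(x)) dμ(x)`. -/
noncomputable def errRate {𝒳 : Type*} [MeasurableSpace 𝒳] (μ : Measure 𝒳) {C : ℕ}
    (η : 𝒳 → Fin C → ℝ) (S : 𝒳 → Finset (Fin C)) : ℝ :=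
  ∫ x, (1 - ∑ k ∈ S x, η x k) ∂μ

/-- Average set size of a set-valued classifier: `ℐ(S) = ∫ |S(x)| dμ(x)`. -/
noncomputable def avgSize {𝒳 : Type*} [MeasurableSpace 𝒳] (μ : Measure 𝒳) {C : ℕ}
    (S : 𝒳 → Finset (Fin C)) : ℝ :=
  ∫ x, ((S x).card : ℝ) ∂μ

/-- `G_η(λ) = ∑_{k=1}^C μ{x : η_k(x) > λ}`. -/
noncomputable def Gfun {𝒳 : Type*} [MeasurableSpace 𝒳] (μ : Measure 𝒳) {C : ℕ}
    (η : 𝒳 → Fin C → ℝ) (lam : ℝ) : ℝ :=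
  ∑ k : Fin C, (μ {x | lam < η x k}).toReal

/-- `λ_𝒦 = min {λ ∈ [0,1] : G_η(λ) ≤ 𝒦}` (as an infimum). -/
noncomputable def lamThresh {𝒳 : Type*} [MeasurableSpace 𝒳] (μ : Measure 𝒳) {C : ℕ}
    (η : 𝒳 → Fin C → ℝ) (K : ℝ) : ℝ :=
  sInf {lam : ℝ | lam ∈ Set.Icc (0 : ℝ) 1 ∧ Gfun μ η lam ≤ K}

/-- `𝒮_𝒦^+(x) = {k : η_k(x) > λ_𝒦}`. -/
noncomputable def Splus {𝒳 : Type*} [MeasurableSpace 𝒳] (μ : Measure 𝒳) {C : ℕ}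
    (η : 𝒳 → Fin C → ℝ) (K : ℝ) : 𝒳 → Finset (Fin C) :=
  fun x => Finset.univ.filter (fun k => lamThresh μ η K < η x k)

private lemma aux_card_perm {C : ℕ} (σ : Equiv.Perm (Fin C)) (p : Fin C → Prop)
    [DecidablePred p] :
    (univ.filter (fun k => p (σ k))).card = (univ.filter p).card := by
  refine Finset.card_bij (fun k _ => σ k) ?_ ?_ ?_
  · intro a ha; simp only [mem_filter, mem_univ, true_and] at ha ⊢; exact ha
  · intro a _ b _ h; exact σ.injective h
  · intro b hb
    refine ⟨σ.symm b, ?_, by simp⟩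
    simp only [mem_filter, mem_univ, true_and] at hb ⊢
    simpa using hb

private lemma aux_le {C K : ℕ} (hKC : K < C) (f : Fin C → ℝ)
    (hs : ∀ i j : Fin C, i ≤ j → f j ≤ f i) (lam : ℝ) :
    f ⟨K, hKC⟩ ≤ lam ↔ (univ.filter (fun k => lam < f k)).card ≤ K := by
  constructor
  · intro h
    have hcard : (univ.filter (fun k => lam < f k)).card ≤ (Finset.range K).card := by
      apply Finset.card_le_card_of_injOn Fin.val
      · intro k hk
        simp only [Finset.mem_coe, mem_filter, mem_univ, true_and] at hk
        simp only [Finset.mem_coe, Finset.mem_range]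
        by_contra hc
        push_neg at hc
        have h2 : f k ≤ f ⟨K, hKC⟩ := hs ⟨K, hKC⟩ k (by simpa [Fin.le_def] using hc)
        linarith
      · exact Fin.val_injective.injOn
    simpa using hcard
  · intro h
    by_contra hc
    push_neg at hc
    have hsub : (Finset.univ : Finset (Fin (K + 1))).card ≤
        (univ.filter (fun k => lam < f k)).card := by
      apply Finset.card_le_card_of_injOn (Fin.castLE (by omega))
      · intro i _
        simp only [Finset.mem_coe, mem_filter, mem_univ, true_and]
        have hle : f ⟨K, hKC⟩ ≤ f (Fin.castLE (by omega) i) := by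
          apply hs
          have := i.isLt
          simp only [Fin.le_def, Fin.coe_castLE]
          omega
        linarith
      · exact (Fin.castLE_injective _).injOn
    simp only [Finset.card_univ, Fintype.card_fin] at hsub
    omega

private lemma aux_ge {C K : ℕ} (hK1 : 1 ≤ K) (hKC : K < C) (f : Fin C → ℝ)
    (hs : ∀ i j : Fin C, i ≤ j → f j ≤ f i) (lam : ℝ) :
    lam ≤ f ⟨K - 1, Nat.lt_of_le_of_lt (Nat.sub_le K 1) hKC⟩ ↔ K ≤ (univ.filter (fun k => lam ≤ f k)).card := by
  constructor
  · intro h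
    have hsub : (Finset.univ : Finset (Fin K)).card ≤
        (univ.filter (fun k => lam ≤ f k)).card := by
      apply Finset.card_le_card_of_injOn (Fin.castLE (by omega))
      · intro i _
        simp only [Finset.mem_coe, mem_filter, mem_univ, true_and]
        have hle : f ⟨K - 1, Nat.lt_of_le_of_lt (Nat.sub_le K 1) hKC⟩ ≤ f (Fin.castLE (by omega) i) := by
          apply hs
          have := i.isLt
          simp only [Fin.le_def, Fin.coe_castLE]
          omega
        linarith
      · exact (Fin.castLE_injective _).injOn
    simpa using hsub
  · intro h
    by_contra hc
    push_neg at hc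
    have hcard : (univ.filter (fun k => lam ≤ f k)).card ≤ (Finset.range (K - 1)).card := by
      apply Finset.card_le_card_of_injOn Fin.val
      · intro k hk
        simp only [Finset.mem_coe, mem_filter, mem_univ, true_and] at hk
        simp only [Finset.mem_coe, Finset.mem_range]
        by_contra hc2
        push_neg at hc2
        have h2 : f k ≤ f ⟨K - 1, Nat.lt_of_le_of_lt (Nat.sub_le K 1) hKC⟩ := by
          apply hs
          simp only [Fin.le_def]
          omega
        linarith
      · exact Fin.val_injective.injOn
    simp only [Finset.card_range] at hcard
    omega

private lemma aux_gt {C K : ℕ} (hK1 : 1 ≤ K) (hKC : K < C) (f : Fin C → ℝ)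
    (hs : ∀ i j : Fin C, i ≤ j → f j ≤ f i) (lam : ℝ)
    (h : lam < f ⟨K - 1, Nat.lt_of_le_of_lt (Nat.sub_le K 1) hKC⟩) :
    K ≤ (univ.filter (fun k => lam < f k)).card := by
  have hsub : (Finset.univ : Finset (Fin K)).card ≤
      (univ.filter (fun k => lam < f k)).card := by
    apply Finset.card_le_card_of_injOn (Fin.castLE (by omega))
    · intro i _
      simp only [Finset.mem_coe, mem_filter, mem_univ, true_and]
      have hle : f ⟨K - 1, Nat.lt_of_le_of_lt (Nat.sub_le K 1) hKC⟩ ≤ f (Fin.castLE (by omega) i) := by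
        apply hs
        have := i.isLt
        simp only [Fin.le_def, Fin.coe_castLE]
        omega
      linarith
    · exact (Fin.castLE_injective _).injOn
  simpa using hsub

/-- for `1 ≤ K < C`, let
`Λ = {λ ∈ [0,1] : μ{x : η̃_{K+1}(x) ≤ λ ≤ η̃_K(x)} = 1}`. If `Λ` is nonempty, then
`λ_K ∈ Λ` and `λ_K = min Λ`, i.e. `λ_K` is the least element of `Λ`. -/
theorem stmt_4 {𝒳 : Type*} [MeasurableSpace 𝒳] (μ : Measure 𝒳) [IsProbabilityMeasure μ]
    {C : ℕ} (η : 𝒳 → Fin C → ℝ)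
    (hη : ∀ k, Measurable fun x => η x k)
    (hη0 : ∀ x k, 0 ≤ η x k) (hη1 : ∀ x, ∑ k, η x k = 1)
    (K : ℕ) (hK1 : 1 ≤ K) (hKC : K < C)
    -- the decreasing rearrangement of the conditional probabilities
    (ηs : 𝒳 → Fin C → ℝ)
    (hηs : ∀ x, ∃ σ : Equiv.Perm (Fin C), (∀ k, ηs x k = η x (σ k)) ∧
      ∀ i j : Fin C, i ≤ j → ηs x j ≤ ηs x i)
    (hne : Set.Nonempty {lam : ℝ | lam ∈ Set.Icc (0 : ℝ) 1 ∧
        μ {x | ηs x ⟨K, hKC⟩ ≤ lam ∧ lam ≤ ηs x ⟨K - 1, by omega⟩} = 1}) :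
    IsLeast {lam : ℝ | lam ∈ Set.Icc (0 : ℝ) 1 ∧
        μ {x | ηs x ⟨K, hKC⟩ ≤ lam ∧ lam ≤ ηs x ⟨K - 1, by omega⟩} = 1}
      (lamThresh μ η (K : ℝ)) := by
  classical
  -- pointwise characterizations via counts
  have hcle : ∀ (x : 𝒳) (lam : ℝ),
      ηs x ⟨K, hKC⟩ ≤ lam ↔ (univ.filter (fun k => lam < η x k)).card ≤ K := by
    intro x lam
    obtain ⟨σ, hp, hsorted⟩ := hηs x
    have hfe : univ.filter (fun k => lam < ηs x k) = univ.filter (fun k => lam < η x (σ k)) := by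
      apply Finset.filter_congr
      intro k _
      simp [hp k]
    rw [aux_le hKC (ηs x) hsorted lam, hfe, aux_card_perm σ (fun k => lam < η x k)]
  have hcge : ∀ (x : 𝒳) (lam : ℝ),
      lam ≤ ηs x ⟨K - 1, by omega⟩ ↔ K ≤ (univ.filter (fun k => lam ≤ η x k)).card := by
    intro x lam
    obtain ⟨σ, hp, hsorted⟩ := hηs x
    have hfe : univ.filter (fun k => lam ≤ ηs x k) = univ.filter (fun k => lam ≤ η x (σ k)) := by
      apply Finset.filter_congr
      intro k _
      simp [hp k]
    rw [aux_ge hK1 hKC (ηs x) hsorted lam, hfe, aux_card_perm σ (fun k => lam ≤ η x k)]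
  have hcgt : ∀ (x : 𝒳) (lam : ℝ), lam < ηs x ⟨K - 1, by omega⟩ →
      K ≤ (univ.filter (fun k => lam < η x k)).card := by
    intro x lam h
    obtain ⟨σ, hp, hsorted⟩ := hηs x
    have hfe : univ.filter (fun k => lam < ηs x k) = univ.filter (fun k => lam < η x (σ k)) := by
      apply Finset.filter_congr
      intro k _
      simp [hp k]
    have := aux_gt hK1 hKC (ηs x) hsorted lam h
    rwa [hfe, aux_card_perm σ (fun k => lam < η x k)] at this
  -- the set rewritten as a measurable condition on counts
  have hset : ∀ lam : ℝ,
      {x | ηs x ⟨K, hKC⟩ ≤ lam ∧ lam ≤ ηs x ⟨K - 1, by omega⟩} =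
      {x | (univ.filter (fun k => lam < η x k)).card ≤ K ∧
           K ≤ (univ.filter (fun k => lam ≤ η x k)).card} := by
    intro lam
    ext x
    simp only [Set.mem_setOf_eq]
    rw [hcle x lam, hcge x lam]
  -- measurability of the counting functions
  have hsum : ∀ lam : ℝ, (fun x => ((univ.filter (fun k => lam < η x k)).card : ℝ)) =
      fun x => ∑ k : Fin C, if lam < η x k then (1 : ℝ) else 0 := by
    intro lam
    funext x
    rw [Finset.card_filter]
    push_cast
    rfl
  have hsum' : ∀ lam : ℝ, (fun x => ((univ.filter (fun k => lam ≤ η x k)).card : ℝ)) =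
      fun x => ∑ k : Fin C, if lam ≤ η x k then (1 : ℝ) else 0 := by
    intro lam
    funext x
    rw [Finset.card_filter]
    push_cast
    rfl
  have hmeasR : ∀ lam : ℝ,
      Measurable (fun x => ((univ.filter (fun k => lam < η x k)).card : ℝ)) := by
    intro lam
    rw [hsum lam]
    exact Finset.measurable_sum _ fun k _ =>
      Measurable.ite (measurableSet_lt measurable_const (hη k)) measurable_const measurable_const
  have hmeasR' : ∀ lam : ℝ,
      Measurable (fun x => ((univ.filter (fun k => lam ≤ η x k)).card : ℝ)) := by
    intro lam
    rw [hsum' lam]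
    exact Finset.measurable_sum _ fun k _ =>
      Measurable.ite (measurableSet_le measurable_const (hη k)) measurable_const measurable_const
  have hTmeas : ∀ lam : ℝ, MeasurableSet
      {x | (univ.filter (fun k => lam < η x k)).card ≤ K ∧
           K ≤ (univ.filter (fun k => lam ≤ η x k)).card} := by
    intro lam
    have h1 : {x | (univ.filter (fun k => lam < η x k)).card ≤ K} =
        {x | ((univ.filter (fun k => lam < η x k)).card : ℝ) ≤ (K : ℝ)} := by
      ext x; simp
    have h2 : {x | K ≤ (univ.filter (fun k => lam ≤ η x k)).card} =
        {x | (K : ℝ) ≤ ((univ.filter (fun k => lam ≤ η x k)).card : ℝ)} := by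
      ext x; simp
    rw [Set.setOf_and, h1, h2]
    exact (measurableSet_le (hmeasR lam) measurable_const).inter
      (measurableSet_le measurable_const (hmeasR' lam))
  -- integrability of the count, and the value of its integral
  have hind : ∀ (lam : ℝ) (k : Fin C),
      Integrable (fun x => if lam < η x k then (1 : ℝ) else 0) μ := by
    intro lam k
    have he : (fun x => if lam < η x k then (1 : ℝ) else 0) =
        Set.indicator {x | lam < η x k} (fun _ => (1 : ℝ)) := by
      funext x
      simp [Set.indicator_apply]
    rw [he]
    exact (integrable_const 1).indicator (measurableSet_lt measurable_const (hη k))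
  have hInt : ∀ lam : ℝ,
      Integrable (fun x => ((univ.filter (fun k => lam < η x k)).card : ℝ)) μ := by
    intro lam
    rw [hsum lam]
    exact integrable_finset_sum _ fun k _ => hind lam k
  have hGint : ∀ lam : ℝ,
      ∫ x, ((univ.filter (fun k => lam < η x k)).card : ℝ) ∂μ = Gfun μ η lam := by
    intro lam
    rw [hsum lam, integral_finset_sum _ fun k _ => hind lam k]
    refine Finset.sum_congr rfl fun k _ => ?_
    have he : (fun x => if lam < η x k then (1 : ℝ) else 0) =
        Set.indicator {x | lam < η x k} (fun _ => (1 : ℝ)) := by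
      funext x
      simp [Set.indicator_apply]
    rw [he, integral_indicator_const _ (measurableSet_lt measurable_const (hη k))]
    simp [measureReal_def]
  -- translate the μ = 1 condition to a.e. statements
  have haeof : ∀ lam : ℝ,
      μ {x | ηs x ⟨K, hKC⟩ ≤ lam ∧ lam ≤ ηs x ⟨K - 1, by omega⟩} = 1 →
      ∀ᵐ x ∂μ, ηs x ⟨K, hKC⟩ ≤ lam ∧ lam ≤ ηs x ⟨K - 1, by omega⟩ := by
    intro lam h
    rw [hset lam] at h
    have h0 := (prob_compl_eq_zero_iff (hTmeas lam)).mpr h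
    have hae2 : ∀ᵐ x ∂μ, (univ.filter (fun k => lam < η x k)).card ≤ K ∧
        K ≤ (univ.filter (fun k => lam ≤ η x k)).card := by
      rw [MeasureTheory.ae_iff]
      simpa [Set.compl_setOf] using h0
    filter_upwards [hae2] with x hx
    exact ⟨(hcle x lam).mpr hx.1, (hcge x lam).mpr hx.2⟩
  have haeto : ∀ lam : ℝ,
      (∀ᵐ x ∂μ, ηs x ⟨K, hKC⟩ ≤ lam ∧ lam ≤ ηs x ⟨K - 1, by omega⟩) →
      μ {x | ηs x ⟨K, hKC⟩ ≤ lam ∧ lam ≤ ηs x ⟨K - 1, by omega⟩} = 1 := by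
    intro lam h
    rw [hset lam]
    refine (prob_compl_eq_zero_iff (hTmeas lam)).mp ?_
    have hae2 : ∀ᵐ x ∂μ, (univ.filter (fun k => lam < η x k)).card ≤ K ∧
        K ≤ (univ.filter (fun k => lam ≤ η x k)).card := by
      filter_upwards [h] with x hx
      exact ⟨(hcle x lam).mp hx.1, (hcge x lam).mp hx.2⟩
    rw [MeasureTheory.ae_iff] at hae2
    simpa [Set.compl_setOf] using hae2
  -- G is antitone
  have hGanti : ∀ a b : ℝ, a ≤ b → Gfun μ η b ≤ Gfun μ η a := by
    intro a b hab
    refine Finset.sum_le_sum fun k _ => ?_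
    exact ENNReal.toReal_mono (measure_ne_top μ _)
      (measure_mono fun x hx => lt_of_le_of_lt hab hx)
  -- if the K-th largest is a.e. ≤ lam then G lam ≤ K
  have hGle : ∀ lam : ℝ, (∀ᵐ x ∂μ, ηs x ⟨K, hKC⟩ ≤ lam) → Gfun μ η lam ≤ (K : ℝ) := by
    intro lam h
    have hae : ∀ᵐ x ∂μ, ((univ.filter (fun k => lam < η x k)).card : ℝ) ≤ (K : ℝ) := by
      filter_upwards [h] with x hx
      exact_mod_cast (hcle x lam).mp hx
    have hle := integral_mono_ae (hInt lam) (integrable_const _) hae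
    rwa [hGint lam, integral_const, probReal_univ, one_smul] at hle
  -- basic facts about the threshold
  obtain ⟨lam0, hlam0⟩ := hne
  simp only [Set.mem_setOf_eq] at hlam0
  have hae0 := haeof lam0 hlam0.2
  have hlam0F : lam0 ∈ {lam : ℝ | lam ∈ Set.Icc (0 : ℝ) 1 ∧ Gfun μ η lam ≤ (K : ℝ)} :=
    ⟨hlam0.1, hGle lam0 (hae0.mono fun x hx => hx.1)⟩
  have hbdd : BddBelow {lam : ℝ | lam ∈ Set.Icc (0 : ℝ) 1 ∧ Gfun μ η lam ≤ (K : ℝ)} :=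
    ⟨0, fun b hb => hb.1.1⟩
  have hTle : lamThresh μ η (K : ℝ) ≤ lam0 := csInf_le hbdd hlam0F
  have hT0 : 0 ≤ lamThresh μ η (K : ℝ) :=
    le_csInf ⟨lam0, hlam0F⟩ fun b hb => hb.1.1
  -- key step: between lamThresh and lam0, the K-th largest is a.e. below
  have hstep : ∀ lam : ℝ, lamThresh μ η (K : ℝ) < lam → lam < lam0 →
      ∀ᵐ x ∂μ, ηs x ⟨K, hKC⟩ ≤ lam := by
    intro lam h1 h2
    obtain ⟨lam', hlam'F, hlam'lt⟩ := exists_lt_of_csInf_lt ⟨lam0, hlam0F⟩ h1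
    have hGlam : Gfun μ η lam ≤ (K : ℝ) := le_trans (hGanti lam' lam hlam'lt.le) hlam'F.2
    have haegeK : ∀ᵐ x ∂μ, (K : ℝ) ≤ ((univ.filter (fun k => lam < η x k)).card : ℝ) := by
      filter_upwards [hae0] with x hx
      exact_mod_cast hcgt x lam (lt_of_lt_of_le h2 hx.2)
    have hge : (K : ℝ) ≤ ∫ x, ((univ.filter (fun k => lam < η x k)).card : ℝ) ∂μ := by
      have h3 := integral_mono_ae (integrable_const _) (hInt lam) haegeK
      rwa [integral_const, probReal_univ, one_smul] at h3
    rw [hGint lam] at hge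
    have heq0 : ∫ x, (((univ.filter (fun k => lam < η x k)).card : ℝ) - K) ∂μ = 0 := by
      rw [integral_sub (hInt lam) (integrable_const _), hGint lam, integral_const,
        probReal_univ, one_smul]
      linarith
    have hzero : (fun x => ((univ.filter (fun k => lam < η x k)).card : ℝ) - K) =ᵐ[μ] 0 := by
      refine (integral_eq_zero_iff_of_nonneg_ae ?_ ((hInt lam).sub (integrable_const _))).mp heq0
      filter_upwards [haegeK] with x hx
      simp only [Pi.sub_apply, Pi.zero_apply, sub_nonneg]
      exact hx
    filter_upwards [hzero] with x hx
    have hval : ((univ.filter (fun k => lam < η x k)).card : ℝ) = (K : ℝ) := by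
      have : ((univ.filter (fun k => lam < η x k)).card : ℝ) - K = 0 := hx
      linarith
    exact (hcle x lam).mpr (by exact_mod_cast hval.le)
  -- conclude: a.e. the K-th largest is ≤ lamThresh
  have haeK : ∀ᵐ x ∂μ, ηs x ⟨K, hKC⟩ ≤ lamThresh μ η (K : ℝ) := by
    rcases eq_or_lt_of_le hTle with heq | hlt
    · rw [heq]
      exact hae0.mono fun x hx => hx.1
    · have hdpos : 0 < lam0 - lamThresh μ η (K : ℝ) := sub_pos.mpr hlt
      have hseq : ∀ n : ℕ, ∀ᵐ x ∂μ,
          ηs x ⟨K, hKC⟩ ≤ lamThresh μ η (K : ℝ) + (lam0 - lamThresh μ η (K : ℝ)) / (n + 2) := by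
        intro n
        apply hstep
        · have hp : 0 < (lam0 - lamThresh μ η (K : ℝ)) / (n + 2) := by positivity
          linarith
        · have h2 : (lam0 - lamThresh μ η (K : ℝ)) / (n + 2) < lam0 - lamThresh μ η (K : ℝ) := by
            apply div_lt_self hdpos
            have : (0 : ℝ) ≤ n := n.cast_nonneg
            linarith
          linarith
      have hall := (MeasureTheory.ae_all_iff).mpr hseq
      filter_upwards [hall] with x hx
      by_contra hc
      push_neg at hc
      have hepos : 0 < ηs x ⟨K, hKC⟩ - lamThresh μ η (K : ℝ) := sub_pos.mpr hc
      obtain ⟨n, hn⟩ := exists_nat_gt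
        ((lam0 - lamThresh μ η (K : ℝ)) / (ηs x ⟨K, hKC⟩ - lamThresh μ η (K : ℝ)))
      have hlt2 : (lam0 - lamThresh μ η (K : ℝ)) / (n + 2) <
          ηs x ⟨K, hKC⟩ - lamThresh μ η (K : ℝ) := by
        rw [div_lt_iff₀ (by positivity)]
        rw [div_lt_iff₀ hepos] at hn
        nlinarith [hepos.le]
      have := hx n
      linarith
  have haeK' : ∀ᵐ x ∂μ, lamThresh μ η (K : ℝ) ≤ ηs x ⟨K - 1, by omega⟩ :=
    hae0.mono fun x hx => le_trans hTle hx.2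
  constructor
  · refine ⟨⟨hT0, hTle.trans hlam0.1.2⟩, ?_⟩
    exact haeto _ (haeK.and haeK')
  · intro lam hlam
    simp only [Set.mem_setOf_eq] at hlam
    exact csInf_le hbdd ⟨hlam.1, hGle lam ((haeof lam hlam.2).mono fun x hx => hx.1)⟩
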